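/- Let 𝔑₁ and 𝔑₂ be mutually commuting, Schlieder-independent von Neumann algebras on a Hilbert space ℋ, and suppose 𝔑₂ contains, for each n, a family of n mutually orthogonal equivalent projections implemented by partial isometries V₁,…,Vₙ ∈ 𝔑₂ with Vᵢ*Vᵢ = V₁V₁*. Set E_{jk} := V_jV_k*. Then the map α from the n×n matrices over 𝔑₁ to B(ℋ) defined by α([A_{jk}]) = Σ_{j,k} A_{jk}E_{jk} is an injective *-homomorphism; in particular its image is a C*-algebra. -/
import Mathlib


open Matrix

/-- The map `α([A_{jk}]) = Σ_{j,k} A_{jk} E_{jk}` built from partial isometries `V j`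
via the matrix units `E_{jk} = V j (V k)*`. -/
noncomputable def alphaMap {H : Type*} [NormedAddCommGroup H] [InnerProductSpace ℂ H]
    [CompleteSpace H] {n : ℕ} (V : Fin n → (H →L[ℂ] H))
    (M : Matrix (Fin n) (Fin n) (H →L[ℂ] H)) : H →L[ℂ] H :=
  ∑ j, ∑ k, M j k * (V j * star (V k))

/-- If `v*v` is idempotent then `v` is a partial isometry: `v (v* v) = v`. -/
lemma pisom_aux {A : Type*} [NormedRing A] [StarRing A] [CStarRing A] (v : A)
    (h : (star v * v) * (star v * v) = star v * v) :
    v * (star v * v) = v := by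
  have hsa : star (star v * v) = star v * v := by simp [StarMul.star_mul, mul_assoc]
  have hA : star v * (v * (star v * v)) = star v * v := by simpa [mul_assoc] using h
  have key : star (v * (star v * v) - v) * (v * (star v * v) - v) = 0 := by
    rw [star_sub, StarMul.star_mul, hsa]
    simp only [sub_mul, mul_sub, mul_assoc, hA, sub_self]
  exact sub_eq_zero.mp ((CStarRing.star_mul_self_eq_zero_iff _).mp key)

/-- Let `𝔑₁, 𝔑₂` be commuting Schlieder-independent von Neumann algebras, and let
`V₁, …, Vₙ ∈ 𝔑₂` be partial isometries with `Vᵢ*Vᵢ = E₁` a common nonzero projection and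
mutually orthogonal ranges `Eᵢ = VᵢVᵢ*`. Then `α([A_{jk}]) = Σ A_{jk} V_j V_k*` is an
injective *-homomorphism of `Mₙ(𝔑₁)` into `B(ℋ)` (hence its image is a C*-algebra). -/
theorem alphaMap_star_hom_injective {H : Type*} [NormedAddCommGroup H]
    [InnerProductSpace ℂ H] [CompleteSpace H]
    (N₁ N₂ : VonNeumannAlgebra H)
    (hcomm : ∀ a ∈ N₁, ∀ b ∈ N₂, a * b = b * a)
    (hSch : ∀ a ∈ N₁, ∀ b ∈ N₂, a ≠ 0 → b ≠ 0 → a * b ≠ 0)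
    (n : ℕ) (V : Fin n → (H →L[ℂ] H))
    (hV : ∀ i, V i ∈ N₂)
    (hiso : ∀ i j, star (V i) * V i = star (V j) * V j)
    (hproj : ∀ i, IsIdempotentElem (star (V i) * V i) ∧ IsSelfAdjoint (star (V i) * V i))
    (hne : ∀ i, star (V i) * V i ≠ 0)
    (horth : ∀ i j, i ≠ j → (V i * star (V i)) * (V j * star (V j)) = 0) :
    ∀ M M' : Matrix (Fin n) (Fin n) (H →L[ℂ] H),
      (∀ j k, M j k ∈ N₁) → (∀ j k, M' j k ∈ N₁) →
      alphaMap V (M + M') = alphaMap V M + alphaMap V M' ∧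
      (∀ c : ℂ, alphaMap V (c • M) = c • alphaMap V M) ∧
      alphaMap V (M * M') = alphaMap V M * alphaMap V M' ∧
      alphaMap V Mᴴ = star (alphaMap V M) ∧
      (alphaMap V M = alphaMap V M' → M = M') := by
  intro M M' hM hM'
  -- partial isometry identities
  have hVp : ∀ i, V i * (star (V i) * V i) = V i := fun i => pisom_aux (V i) (hproj i).1
  have hstarVp : ∀ i, (star (V i) * V i) * star (V i) = star (V i) := by
    intro i
    have := congrArg star (hVp i)
    simpa [StarMul.star_mul, mul_assoc] using this
  have horthV : ∀ k l, k ≠ l → star (V k) * V l = 0 := by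
    intro k l hkl
    calc star (V k) * V l
        = ((star (V k) * V k) * star (V k)) * (V l * (star (V l) * V l)) := by
          rw [hstarVp, hVp]
      _ = star (V k) * (((V k * star (V k)) * (V l * star (V l))) * V l) := by
          simp only [mul_assoc]
      _ = 0 := by rw [horth k l hkl]; simp
  have kron : ∀ k l, star (V k) * V l = if k = l then star (V l) * V l else 0 := by
    intro k l
    by_cases h : k = l
    · subst h; simp
    · simp [h, horthV k l h]
  -- membership helpers
  have hVmem : ∀ j k, V j * star (V k) ∈ N₂ := fun j k => mul_mem (hV j) (star_mem (hV k))
  -- commuting of N₁ elements with products of V's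
  have hc : ∀ a ∈ N₁, ∀ j k, (V j * star (V k)) * a = a * (V j * star (V k)) := by
    intro a ha j k
    exact (hcomm a ha _ (hVmem j k)).symm
  refine ⟨?_, ?_, ?_, ?_, ?_⟩
  · simp [alphaMap, Matrix.add_apply, add_mul, Finset.sum_add_distrib]
  · intro c
    simp [alphaMap, Matrix.smul_apply, smul_mul_assoc, Finset.smul_sum]
  · -- multiplicativity
    have term : ∀ j k l m, (M j k * (V j * star (V k))) * (M' l m * (V l * star (V m)))
        = if k = l then (M j k * M' l m) * (V j * star (V m)) else 0 := by
      intro j k l m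
      have step1 : (M j k * (V j * star (V k))) * (M' l m * (V l * star (V m)))
          = (M j k * M' l m) * ((V j * star (V k)) * (V l * star (V m))) := by
        calc (M j k * (V j * star (V k))) * (M' l m * (V l * star (V m)))
            = M j k * (((V j * star (V k)) * M' l m) * (V l * star (V m))) := by
              simp only [mul_assoc]
          _ = M j k * ((M' l m * (V j * star (V k))) * (V l * star (V m))) := by
              rw [hc _ (hM' l m) j k]
          _ = (M j k * M' l m) * ((V j * star (V k)) * (V l * star (V m))) := by
              simp only [mul_assoc]
      rw [step1]
      have step2 : (V j * star (V k)) * (V l * star (V m))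
          = if k = l then V j * star (V m) else 0 := by
        have h0 : (V j * star (V k)) * (V l * star (V m))
            = V j * ((star (V k) * V l) * star (V m)) := by simp only [mul_assoc]
        rw [h0, kron]
        by_cases h : k = l
        · rw [if_pos h, if_pos h, hiso l m, hstarVp m]
        · rw [if_neg h, if_neg h]; simp
      rw [step2]
      by_cases h : k = l
      · rw [if_pos h, if_pos h, mul_assoc]
      · rw [if_neg h, if_neg h, mul_zero]
    have expand : alphaMap V M * alphaMap V M'
        = ∑ j, ∑ k, ∑ l, ∑ m,
            (M j k * (V j * star (V k))) * (M' l m * (V l * star (V m))) := by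
      show (∑ j, ∑ k, M j k * (V j * star (V k))) * (∑ l, ∑ m, M' l m * (V l * star (V m)))
        = _
      rw [Finset.sum_mul]
      refine Finset.sum_congr rfl fun j _ => ?_
      rw [Finset.sum_mul]
      refine Finset.sum_congr rfl fun k _ => ?_
      rw [Finset.mul_sum]
      refine Finset.sum_congr rfl fun l _ => ?_
      rw [Finset.mul_sum]
    have rhs : ∑ j, ∑ k, ∑ l, ∑ m,
          (M j k * (V j * star (V k))) * (M' l m * (V l * star (V m)))
        = ∑ j, ∑ m, (∑ k, M j k * M' k m) * (V j * star (V m)) := by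
      refine Finset.sum_congr rfl fun j _ => ?_
      calc ∑ k, ∑ l, ∑ m, (M j k * (V j * star (V k))) * (M' l m * (V l * star (V m)))
          = ∑ k, ∑ l, ∑ m, if k = l then (M j k * M' l m) * (V j * star (V m)) else 0 := by
            exact Finset.sum_congr rfl fun k _ => Finset.sum_congr rfl fun l _ =>
              Finset.sum_congr rfl fun m _ => term j k l m
        _ = ∑ k, ∑ m, (M j k * M' k m) * (V j * star (V m)) := by
            refine Finset.sum_congr rfl fun k _ => ?_
            rw [Finset.sum_comm]
            refine Finset.sum_congr rfl fun m _ => ?_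
            simp
        _ = ∑ m, ∑ k, (M j k * M' k m) * (V j * star (V m)) := Finset.sum_comm
        _ = ∑ m, (∑ k, M j k * M' k m) * (V j * star (V m)) :=
            Finset.sum_congr rfl fun m _ => (Finset.sum_mul _ _ _).symm
    rw [expand, rhs]
    simp only [alphaMap, Matrix.mul_apply]
  · -- star
    have termstar : ∀ j k, star (M j k * (V j * star (V k)))
        = star (M j k) * (V k * star (V j)) := by
      intro j k
      rw [StarMul.star_mul, StarMul.star_mul, star_star]
      exact hc _ (star_mem (hM j k)) k j
    calc alphaMap V Mᴴ
        = ∑ j, ∑ k, star (M k j) * (V j * star (V k)) := by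
          simp [alphaMap, Matrix.conjTranspose_apply]
      _ = ∑ k, ∑ j, star (M k j) * (V j * star (V k)) := Finset.sum_comm
      _ = star (alphaMap V M) := by
          simp only [alphaMap, star_sum]
          exact Finset.sum_congr rfl fun j _ =>
            Finset.sum_congr rfl fun k _ => (termstar j k).symm
  · -- injectivity
    intro hEq
    have key : ∀ (N : Matrix (Fin n) (Fin n) (H →L[ℂ] H)), (∀ j k, N j k ∈ N₁) →
        ∀ a b, star (V a) * alphaMap V N * V b = N a b * (star (V a) * V a) := by
      intro N hN a b
      have expand : star (V a) * alphaMap V N * V b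
          = ∑ j, ∑ k, star (V a) * (N j k * (V j * star (V k))) * V b := by
        show star (V a) * (∑ j, ∑ k, N j k * (V j * star (V k))) * V b = _
        rw [Finset.mul_sum, Finset.sum_mul]
        refine Finset.sum_congr rfl fun j _ => ?_
        rw [Finset.mul_sum, Finset.sum_mul]
      rw [expand]
      have term : ∀ j k, star (V a) * (N j k * (V j * star (V k))) * V b
          = if a = j then (if k = b then N j k * (star (V a) * V a) else 0) else 0 := by
        intro j k
        have comm1 : star (V a) * N j k = N j k * star (V a) :=
          (hcomm _ (hN j k) _ (star_mem (hV a))).symm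
        have step : star (V a) * (N j k * (V j * star (V k))) * V b
            = N j k * ((star (V a) * V j) * (star (V k) * V b)) := by
          calc star (V a) * (N j k * (V j * star (V k))) * V b
              = (star (V a) * N j k) * (V j * (star (V k) * V b)) := by
                simp only [mul_assoc]
            _ = N j k * ((star (V a) * V j) * (star (V k) * V b)) := by
                rw [comm1]; simp only [mul_assoc]
        rw [step, kron a j, kron k b]
        by_cases h1 : a = j
        · by_cases h2 : k = b
          · rw [if_pos h1, if_pos h2, if_pos h1, if_pos h2]
            have : (star (V j) * V j) * (star (V b) * V b) = star (V a) * V a := by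
              rw [hiso j a, hiso b a]; exact (hproj a).1
            rw [this]
          · rw [if_neg h2, mul_zero, mul_zero, if_pos h1, if_neg h2]
        · rw [if_neg h1, zero_mul, mul_zero, if_neg h1]
      calc ∑ j, ∑ k, star (V a) * (N j k * (V j * star (V k))) * V b
          = ∑ j, ∑ k, if a = j then (if k = b then N j k * (star (V a) * V a) else 0) else 0 := by
            exact Finset.sum_congr rfl fun j _ => Finset.sum_congr rfl fun k _ => term j k
        _ = N a b * (star (V a) * V a) := by
            simp [Finset.sum_ite_eq, Finset.sum_ite_eq']
    refine Matrix.ext fun a b => ?_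
    have h1 := key M hM a b
    have h2 := key M' hM' a b
    rw [hEq] at h1
    have h3 : (M a b - M' a b) * (star (V a) * V a) = 0 := by
      rw [sub_mul, h1.symm.trans h2, sub_self]
    by_contra hne'
    exact hSch _ (sub_mem (hM a b) (hM' a b)) _ (mul_mem (star_mem (hV a)) (hV a))
      (sub_ne_zero.mpr hne') (hne a) h3
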